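/- arXiv:2407.20122 — 2 statements merged into one kernel-verified Lean document; each statement's English description precedes it below -/
import Mathlib

section
/- For every positive integer m, every p ∈ [0,1] and every δ ∈ (0,1), B(m, p, δ) ≤ sqrt( log(1/δ) / (2m) ); that is, the verification-conditioned generalisation bound is at least as tight as the unconditioned bound. -/
open Real

/-- The verification-conditioned bound `B(m,p,δ)` is at least as tight as the
unconditioned bound `√(log(1/δ)/(2m))`. -/
theorem conditioned_bound_tighter
    (m : ℕ) (hm : 0 < m) (p : ℝ) (hp : p ∈ Set.Icc (0 : ℝ) 1)
    (δ : ℝ) (hδ : δ ∈ Set.Ioo (0 : ℝ) 1) :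
    Real.sqrt ((1 / 2) *
        Real.log (((1 - p) + Real.sqrt ((1 - p) ^ 2 + 4 * δ ^ ((1 : ℝ) / m) * p)) /
          (2 * δ ^ ((1 : ℝ) / m)))) ≤
      Real.sqrt (Real.log (1 / δ) / (2 * m)) := by
  obtain ⟨hp0, hp1⟩ := hp
  obtain ⟨hδ0, hδ1⟩ := hδ
  set d : ℝ := δ ^ ((1 : ℝ) / m) with hd
  have hd0 : 0 < d := Real.rpow_pos_of_pos hδ0 _
  have hd1 : d ≤ 1 := Real.rpow_le_one (le_of_lt hδ0) (le_of_lt hδ1) (by positivity)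
  have hm' : (0 : ℝ) < m := by exact_mod_cast hm
  apply Real.sqrt_le_sqrt
  have hs : 0 ≤ Real.sqrt ((1 - p) ^ 2 + 4 * d * p) := Real.sqrt_nonneg _
  have hnum : (1 - p) + Real.sqrt ((1 - p) ^ 2 + 4 * d * p) ≤ 2 := by
    have h1 : Real.sqrt ((1 - p) ^ 2 + 4 * d * p) ≤ 1 + p := by
      rw [show (1 : ℝ) + p = Real.sqrt ((1 + p) ^ 2) from
        (Real.sqrt_sq (by linarith)).symm]
      apply Real.sqrt_le_sqrt
      nlinarith
    linarith
  have hnumpos : 0 < (1 - p) + Real.sqrt ((1 - p) ^ 2 + 4 * d * p) := by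
    rcases lt_or_eq_of_le hp1 with h | h
    · linarith
    · rw [h]
      have h4 : (0 : ℝ) < (1 - 1) ^ 2 + 4 * d * 1 := by nlinarith
      have := Real.sqrt_pos.mpr h4
      linarith
  have hApos : 0 < ((1 - p) + Real.sqrt ((1 - p) ^ 2 + 4 * d * p)) / (2 * d) :=
    div_pos hnumpos (by linarith)
  have hA : ((1 - p) + Real.sqrt ((1 - p) ^ 2 + 4 * d * p)) / (2 * d) ≤ 1 / d := by
    rw [div_le_div_iff₀ (by linarith) hd0]
    nlinarith
  have hlogd : Real.log d = (1 / m) * Real.log δ := Real.log_rpow hδ0 _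
  calc (1 / 2) * Real.log (((1 - p) + Real.sqrt ((1 - p) ^ 2 + 4 * d * p)) / (2 * d))
      ≤ (1 / 2) * Real.log (1 / d) := by
        have := Real.log_le_log hApos hA
        linarith
    _ = Real.log (1 / δ) / (2 * m) := by
        rw [one_div d, Real.log_inv, hlogd, one_div δ, Real.log_inv]
        field_simp
end

section
/- Let p ∈ [0,1] and define ψ(u) = (p−1)·u + log( p + (1−p)·e^u ) for u ∈ ℝ. Then ψ(u) ≤ u²/8 for all u ∈ ℝ. -/
/-!
`ψ(u)` is the cumulant generating function at `u` of `Z - 𝔼 Z`, where `Z` is the Bernoulli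
variable taking the value `0` with probability `p` and `1` with probability `1 - p`. Since `Z`
takes values in `[0, 1]`, Hoeffding's lemma bounds it by `(1 / 2) ^ 2 * u ^ 2 / 2 = u ^ 2 / 8`.
-/

open Real MeasureTheory ProbabilityTheory unitInterval

namespace ProbabilityTheory

variable {X : Type*} [MeasurableSpace X] {x y : X}

lemma ae_mem_of_mem_of_mem_bernoulliMeasure (p : I) {s : Set X} (hs : MeasurableSet s)
    (hx : x ∈ s) (hy : y ∈ s) : ∀ᵐ z ∂Ber(x, y, p), z ∈ s :=
  ae_iff.2 <| bernoulliMeasure_apply_of_notMem_of_notMem p hs.compl (not_not.2 hx) (not_not.2 hy)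

lemma integral_id_bernoulliMeasure_zero_one (p : I) :
    ∫ z, z ∂Ber((0 : ℝ), 1, p) = 1 - (p : ℝ) := by
  simp [integral_bernoulliMeasure]

lemma cgf_sub_integral_bernoulliMeasure_zero_one (p : I) (t : ℝ) :
    cgf (fun z ↦ z - ∫ z, z ∂Ber((0 : ℝ), 1, p)) Ber((0 : ℝ), 1, p) t
      = (p - 1) * t + log (p + (1 - p) * exp t) := by
  have hmgf : mgf (fun z ↦ z - ∫ z, z ∂Ber((0 : ℝ), 1, p)) Ber((0 : ℝ), 1, p) t
      = exp ((p - 1) * t) * (p + (1 - p) * exp t) := by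
    rw [mgf, integral_bernoulliMeasure, integral_id_bernoulliMeasure_zero_one,
      show t * (1 - (1 - p)) = (p - 1) * t + t by ring, exp_add]
    simp only [smul_eq_mul]
    ring_nf
  have hpos : 0 < (p : ℝ) + (1 - p) * exp t := by
    rcases le_total 1 (exp t) with h | h
    · nlinarith [p.2.1, p.2.2]
    · nlinarith [p.2.1, p.2.2, exp_pos t]
  rw [cgf, hmgf, log_mul (exp_pos _).ne' hpos.ne', log_exp]

end ProbabilityTheory

/-- For `p ∈ [0,1]` the function `ψ(u) = (p−1)·u + log(p + (1−p)·eᵘ)` satisfies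
`ψ(u) ≤ u²/8` for all `u ∈ ℝ`. -/
theorem psi_le_quarter_sq
    (p : ℝ) (hp : p ∈ Set.Icc (0 : ℝ) 1) (u : ℝ) :
    (p - 1) * u + Real.log (p + (1 - p) * Real.exp u) ≤ u ^ 2 / 8 := by
  have hoeffding := (hasSubgaussianMGF_of_mem_Icc (X := fun z : ℝ ↦ z) aemeasurable_id'
    (ae_mem_of_mem_of_mem_bernoulliMeasure ⟨p, hp⟩ measurableSet_Icc
      (Set.left_mem_Icc.2 zero_le_one) (Set.right_mem_Icc.2 zero_le_one))).cgf_le u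
  rw [cgf_sub_integral_bernoulliMeasure_zero_one] at hoeffding
  convert hoeffding using 1
  norm_num
  ring
end
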